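/- J₁ is simple under the two operators: every subspace W ⊆ J₁ with A(W) ⊆ W and B(W) ⊆ W is either 0 or J₁. -/

import Mathlib

noncomputable section

/-- Index set for the GTA basis: `x⁺_s` (s = 1..p), `x⁻_s` (s = 1..p), `g_s` (s = 1..p-1). -/
abbrev GTAIdx (p : ℕ) := (Fin p ⊕ Fin p) ⊕ Fin (p - 1)

/-- The underlying (3p-1)-dimensional complex vector space. -/
abbrev GTA (p : ℕ) := GTAIdx p → ℂ

/-- `ε = exp(iπ/2p)`. -/
def eps (p : ℕ) : ℂ := Complex.exp (Real.pi * Complex.I / (2 * p))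

/-- The basis vector `x⁺_s` for `1 ≤ s ≤ p`, and `0` otherwise. -/
def xp (p : ℕ) (s : ℕ) : GTA p :=
  if h : 1 ≤ s ∧ s ≤ p then Pi.single (Sum.inl (Sum.inl ⟨s - 1, by omega⟩)) 1 else 0

/-- The basis vector `x⁻_s` for `1 ≤ s ≤ p`, and `0` otherwise. -/
def xm (p : ℕ) (s : ℕ) : GTA p :=
  if h : 1 ≤ s ∧ s ≤ p then Pi.single (Sum.inl (Sum.inr ⟨s - 1, by omega⟩)) 1 else 0

/-- The basis vector `g_s` for `1 ≤ s ≤ p-1`, and `0` otherwise. -/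
def gv (p : ℕ) (s : ℕ) : GTA p :=
  if h : 1 ≤ s ∧ s ≤ p - 1 then Pi.single (Sum.inr ⟨s - 1, by omega⟩) 1 else 0

/-- The quantum integer `[s] = (ε^{2s} - ε^{-2s})/(ε² - ε^{-2})`. -/
def br (p : ℕ) (s : ℕ) : ℂ :=
  ((eps p) ^ (2 * s) - (eps p)⁻¹ ^ (2 * s)) / ((eps p) ^ 2 - (eps p)⁻¹ ^ 2)

/-- The operator `A` (action of the curve `a`) in the GTA basis. -/
def Aop (p : ℕ) : Module.End ℂ (GTA p) :=
  (Pi.basisFun ℂ (GTAIdx p)).constr ℂ fun i =>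
    match i with
    | .inl (.inl i) =>
        (-((eps p) ^ (2 * (i.1 + 1)) + (eps p)⁻¹ ^ (2 * (i.1 + 1)))) • xp p (i.1 + 1)
    | .inl (.inr i) =>
        (((eps p) ^ (2 * (i.1 + 1)) + (eps p)⁻¹ ^ (2 * (i.1 + 1)))) • xm p (i.1 + 1)
    | .inr i =>
        (-((eps p) ^ (2 * (i.1 + 1)) + (eps p)⁻¹ ^ (2 * (i.1 + 1)))) • gv p (i.1 + 1)
          - (((eps p) ^ 2 - (eps p)⁻¹ ^ 2) ^ 2) • (xp p (i.1 + 1) + xm p (p - (i.1 + 1)))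

/-- The operator `B` (action of the curve `b`) in the GTA basis. -/
def Bop (p : ℕ) : Module.End ℂ (GTA p) :=
  (Pi.basisFun ℂ (GTAIdx p)).constr ℂ fun i =>
    match i with
    | .inl (.inl i) =>
        if i.1 + 1 = p then (2 : ℂ) • xp p (p - 1) + (2 : ℂ) • xm p 1
        else xp p i.1 + xp p (i.1 + 2)
    | .inl (.inr i) =>
        if i.1 + 1 = p then (2 : ℂ) • xm p (p - 1) + (2 : ℂ) • xp p 1
        else xm p i.1 + xm p (i.1 + 2)
    | .inr i =>
        (br p i.1 / br p (i.1 + 1)) • gv p i.1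
          + (br p (i.1 + 2) / br p (i.1 + 1)) • gv p (i.1 + 2)

/-- `J₁`: the span of the vectors `x⁺_s + x⁻_{p-s}` (1 ≤ s ≤ p-1), `x⁺_p` and `x⁻_p`. -/
def J1 (p : ℕ) : Submodule ℂ (GTA p) :=
  Submodule.span ℂ
    ((Set.range fun s : Fin (p - 1) => xp p (s.1 + 1) + xm p (p - (s.1 + 1)))
      ∪ {xp p p, xm p p})

/-- `J₂ = J₁ + span{x⁺_s : 1 ≤ s ≤ p-1}`. -/
def J2 (p : ℕ) : Submodule ℂ (GTA p) :=
  J1 p ⊔ Submodule.span ℂ (Set.range fun s : Fin (p - 1) => xp p (s.1 + 1))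

end

/-! Put `e_k = x⁺_k + x⁻_{p-k}` for `0 ≤ k ≤ p` (so `e_0 = x⁻_p`, `e_p = x⁺_p`); these span
`J₁`. They are eigenvectors of `A` with eigenvalues `-(ε^{2k} + ε^{-2k})`, pairwise distinct since
`ε` is a primitive `4p`-th root of unity, and `B e_k = e_{k-1} + e_{k+1}`, `B e_0 = 2 e_1`,
`B e_p = 2 e_{p-1}`. Distinct eigenvalues force an `A`-invariant `W` to contain every `e_k`
occurring in one of its vectors; then `B` carries membership from `e_k` to its neighbours, so a
nonzero `W` contains all the `e_k`. -/

namespace Submodule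

variable {K V ι : Type*} [Field K] [AddCommGroup V] [Module K V]
  {f : Module.End K V} {W : Submodule K V} {v : ι → V} {μ : ι → K}

theorem mem_of_smul_add_sum_eigenvectors_mem (hW : ∀ x ∈ W, f x ∈ W)
    (hv : ∀ i, f (v i) = μ i • v i) {k : ι} {s : Finset ι} (hμ : ∀ i ∈ s, μ i ≠ μ k)
    {a : K} (ha : a ≠ 0) {c : ι → K} (h : a • v k + ∑ i ∈ s, c i • v i ∈ W) :
    v k ∈ W := by
  classical
  induction s using Finset.induction_on generalizing a c with
  | empty => simpa [W.smul_mem_iff ha] using h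
  | insert j s hj ih =>
    set w := a • v k + ∑ i ∈ insert j s, c i • v i with hw
    -- `f - μ j` kills the `j`-th term and keeps the coefficient of `v k` nonzero
    have hfw :
        f w - μ j • w = (a * (μ k - μ j)) • v k + ∑ i ∈ s, (c i * (μ i - μ j)) • v i := by
      simp only [hw, map_add, map_sum, map_smul, hv, Finset.sum_insert hj, smul_add,
        Finset.smul_sum, mul_sub, sub_smul, mul_smul, Finset.sum_sub_distrib]
      rw [smul_comm (μ j) a, smul_comm (μ j) (c j)]
      simp only [Finset.sum_congr rfl fun i _ => smul_comm (μ j) (c i) (v i)]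
      abel
    have hμj : μ k - μ j ≠ 0 := sub_ne_zero.mpr (hμ j (Finset.mem_insert_self j s)).symm
    exact ih (fun i hi => hμ i (Finset.mem_insert_of_mem hi)) (mul_ne_zero ha hμj)
      (hfw ▸ W.sub_mem (hW _ h) (W.smul_mem _ h))

theorem mem_of_add_eigenvectors_mem (hW : ∀ x ∈ W, f x ∈ W)
    (hv : ∀ i, f (v i) = μ i • v i) {j k : ι} (hμ : μ j ≠ μ k) (h : v k + v j ∈ W) :
    v k ∈ W :=
  mem_of_smul_add_sum_eigenvectors_mem hW hv (s := {j}) (by simpa using hμ) one_ne_zero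
    (c := 1) (by simpa using h)

end Submodule

variable {p : ℕ}

theorem isPrimitiveRoot_eps (hp : p ≠ 0) : IsPrimitiveRoot (eps p) (4 * p) := by
  rw [eps]
  convert Complex.isPrimitiveRoot_exp (4 * p) (by omega) using 2
  push_cast
  field_simp
  ring

theorem eps_pow_two_mul_self (hp : p ≠ 0) : eps p ^ (2 * p) = -1 := by
  have := (isPrimitiveRoot_eps hp).pow_of_dvd (p := 2 * p) (by omega) ⟨2, by ring⟩
  rw [show 4 * p / (2 * p) = 2 from Nat.div_eq_of_eq_mul_left (by omega) (by ring)] at this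
  exact this.eq_neg_one_of_two_right

noncomputable def aEig (p k : ℕ) : ℂ := -(eps p ^ (2 * k) + (eps p)⁻¹ ^ (2 * k))

theorem aEig_injOn (hp : p ≠ 0) : Set.InjOn (aEig p) (Set.Iic p) := by
  have hε := isPrimitiveRoot_eps hp
  have h0 : eps p ≠ 0 := hε.ne_zero (by omega)
  suffices ∀ j k, j < k → k ≤ p → aEig p j ≠ aEig p k by
    intro j hj k hk hjk
    by_contra hne
    rcases Nat.lt_or_gt_of_ne hne with h | h
    · exact this j k h hk hjk
    · exact this k j h hj hjk.symm
  intro j k hjk hk h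
  have hfactor :
      (eps p ^ (2 * j) - eps p ^ (2 * k)) * (eps p ^ (2 * j) * eps p ^ (2 * k) - 1) = 0 := by
    rw [aEig, aEig, neg_inj, inv_pow, inv_pow] at h
    field_simp at h
    linear_combination h
  rcases mul_eq_zero.mp hfactor with h1 | h1
  · have := hε.pow_inj (by omega) (by omega) (sub_eq_zero.mp h1)
    omega
  · rw [← pow_add, ← pow_zero (eps p)] at h1
    have := hε.pow_inj (by omega) (by omega) (sub_eq_zero.mp h1)
    omega

theorem xp_zero : xp p 0 = 0 := dif_neg (by omega)

theorem xm_zero : xm p 0 = 0 := dif_neg (by omega)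

theorem xp_of_lt {s : ℕ} (h : p < s) : xp p s = 0 := dif_neg (by omega)

theorem xm_of_lt {s : ℕ} (h : p < s) : xm p s = 0 := dif_neg (by omega)

theorem xp_eq_basisFun {s : ℕ} (h1 : 1 ≤ s) (h2 : s ≤ p) :
    xp p s = Pi.basisFun ℂ (GTAIdx p) (.inl (.inl ⟨s - 1, by omega⟩)) := by
  rw [Pi.basisFun_apply]; exact dif_pos ⟨h1, h2⟩

theorem xm_eq_basisFun {s : ℕ} (h1 : 1 ≤ s) (h2 : s ≤ p) :
    xm p s = Pi.basisFun ℂ (GTAIdx p) (.inl (.inr ⟨s - 1, by omega⟩)) := by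
  rw [Pi.basisFun_apply]; exact dif_pos ⟨h1, h2⟩

theorem Aop_xp (s : ℕ) : Aop p (xp p s) = aEig p s • xp p s := by
  rcases Nat.eq_zero_or_pos s with rfl | hs0
  · simp [xp_zero]
  rcases lt_or_ge p s with hs | hs
  · simp [xp_of_lt hs]
  conv_lhs => rw [xp_eq_basisFun hs0 hs, Aop, Module.Basis.constr_basis]
  dsimp only
  rw [Nat.sub_add_cancel hs0, aEig]

theorem Aop_xm (s : ℕ) : Aop p (xm p s) = -aEig p s • xm p s := by
  rcases Nat.eq_zero_or_pos s with rfl | hs0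
  · simp [xm_zero]
  rcases lt_or_ge p s with hs | hs
  · simp [xm_of_lt hs]
  conv_lhs => rw [xm_eq_basisFun hs0 hs, Aop, Module.Basis.constr_basis]
  dsimp only
  rw [Nat.sub_add_cancel hs0, aEig, neg_neg]

theorem Bop_xp_of_lt {s : ℕ} (h1 : 1 ≤ s) (h2 : s < p) :
    Bop p (xp p s) = xp p (s - 1) + xp p (s + 1) := by
  conv_lhs => rw [xp_eq_basisFun h1 h2.le, Bop, Module.Basis.constr_basis]
  dsimp only
  rw [if_neg (by omega), show s - 1 + 2 = s + 1 by omega]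

theorem Bop_xm_of_lt {s : ℕ} (h1 : 1 ≤ s) (h2 : s < p) :
    Bop p (xm p s) = xm p (s - 1) + xm p (s + 1) := by
  conv_lhs => rw [xm_eq_basisFun h1 h2.le, Bop, Module.Basis.constr_basis]
  dsimp only
  rw [if_neg (by omega), show s - 1 + 2 = s + 1 by omega]

theorem Bop_xp_self (hp : p ≠ 0) :
    Bop p (xp p p) = (2 : ℂ) • xp p (p - 1) + (2 : ℂ) • xm p 1 := by
  conv_lhs => rw [xp_eq_basisFun (by omega) le_rfl, Bop, Module.Basis.constr_basis]
  exact if_pos (Nat.sub_add_cancel (Nat.one_le_iff_ne_zero.mpr hp))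

theorem Bop_xm_self (hp : p ≠ 0) :
    Bop p (xm p p) = (2 : ℂ) • xm p (p - 1) + (2 : ℂ) • xp p 1 := by
  conv_lhs => rw [xm_eq_basisFun (by omega) le_rfl, Bop, Module.Basis.constr_basis]
  exact if_pos (Nat.sub_add_cancel (Nat.one_le_iff_ne_zero.mpr hp))

theorem aEig_sub_self (hp : p ≠ 0) {k : ℕ} (hk : k ≤ p) : aEig p (p - k) = -aEig p k := by
  have hx : eps p ^ (2 * k) ≠ 0 := pow_ne_zero _ ((isPrimitiveRoot_eps hp).ne_zero (by omega))
  have hprod : eps p ^ (2 * (p - k)) * eps p ^ (2 * k) = -1 := by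
    rw [← pow_add, show 2 * (p - k) + 2 * k = 2 * p by omega, eps_pow_two_mul_self hp]
  have hpk : eps p ^ (2 * (p - k)) = -(eps p ^ (2 * k))⁻¹ := by
    field_simp
    linear_combination hprod
  rw [aEig, aEig, inv_pow, inv_pow, hpk, inv_neg, inv_inv]
  ring

def xpm (p k : ℕ) : GTA p := xp p k + xm p (p - k)

theorem xpm_zero : xpm p 0 = xm p p := by rw [xpm, xp_zero, zero_add, Nat.sub_zero]

theorem xpm_self : xpm p p = xp p p := by rw [xpm, Nat.sub_self, xm_zero, add_zero]

theorem Aop_xpm (hp : p ≠ 0) (k : ℕ) : Aop p (xpm p k) = aEig p k • xpm p k := by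
  rcases le_or_gt k p with hk | hk
  · rw [xpm, map_add, Aop_xp, Aop_xm, aEig_sub_self hp hk, neg_neg, smul_add]
  · simp [xpm, xp_of_lt hk, Nat.sub_eq_zero_of_le hk.le, xm_zero]

theorem Bop_xpm_zero (hp : p ≠ 0) : Bop p (xpm p 0) = (2 : ℂ) • xpm p 1 := by
  rw [xpm_zero, Bop_xm_self hp, xpm, smul_add, add_comm]

theorem Bop_xpm_self (hp : p ≠ 0) : Bop p (xpm p p) = (2 : ℂ) • xpm p (p - 1) := by
  rw [xpm_self, Bop_xp_self hp, xpm, smul_add, Nat.sub_sub_self (by omega)]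

theorem Bop_xpm_of_lt {k : ℕ} (h1 : 1 ≤ k) (h2 : k < p) :
    Bop p (xpm p k) = xpm p (k - 1) + xpm p (k + 1) := by
  rw [xpm, map_add, Bop_xp_of_lt h1 h2, Bop_xm_of_lt (by omega) (by omega), xpm, xpm,
    show p - (k - 1) = p - k + 1 by omega, show p - (k + 1) = p - k - 1 by omega]
  abel

theorem J1_eq_span : J1 p = Submodule.span ℂ (xpm p '' ↑(Finset.range (p + 1))) := by
  rw [J1]
  congr 1
  ext x
  simp only [Set.mem_union, Set.mem_range, Set.mem_insert_iff, Set.mem_singleton_iff,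
    Finset.coe_range, Set.mem_image, Set.mem_Iio]
  constructor
  · rintro ((⟨s, rfl⟩ | rfl | rfl))
    · exact ⟨s + 1, by omega, rfl⟩
    · exact ⟨p, by omega, xpm_self⟩
    · exact ⟨0, by omega, xpm_zero⟩
  · rintro ⟨k, hk, rfl⟩
    rcases k with _ | k
    · exact .inr (.inr xpm_zero)
    rcases (Nat.lt_succ_iff.mp hk).eq_or_lt with rfl | hk
    · exact .inr (.inl xpm_self)
    · exact .inl ⟨⟨k, by omega⟩, rfl⟩

theorem Nat.forall_le_of_forall_lt_iff_succ {P : ℕ → Prop} {n k : ℕ} (hk : k ≤ n)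
    (hPk : P k) (hstep : ∀ i < n, (P i ↔ P (i + 1))) : ∀ j ≤ n, P j := by
  have hP0 : P 0 := by
    induction k with
    | zero => exact hPk
    | succ k ih => exact ih (by omega) ((hstep k (by omega)).mpr hPk)
  intro j hj
  induction j with
  | zero => exact hP0
  | succ j ih => exact (hstep j hj).mp (ih (by omega))

section Invariant

variable {W : Submodule ℂ (GTA p)} (hp : p ≠ 0) (hA : ∀ v ∈ W, Aop p v ∈ W)
include hp hA

theorem exists_xpm_mem (hWJ : W ≤ J1 p) (hW : W ≠ ⊥) : ∃ k ≤ p, xpm p k ∈ W := by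
  obtain ⟨w, hwW, hw0⟩ := W.ne_bot_iff.mp hW
  obtain ⟨c, hc⟩ :=
    (Submodule.mem_span_image_finset_iff_exists_fun' ℂ).mp (J1_eq_span ▸ hWJ hwW)
  obtain ⟨k, hk, hck⟩ : ∃ k ∈ Finset.range (p + 1), c k ≠ 0 := by
    by_contra! h
    exact hw0 (hc ▸ Finset.sum_eq_zero fun i hi => by simp [h i hi])
  have hk' : k ≤ p := Finset.mem_range_succ_iff.mp hk
  refine ⟨k, hk', W.mem_of_smul_add_sum_eigenvectors_mem hA (Aop_xpm hp)
    (s := (Finset.range (p + 1)).erase k) ?_ hck (c := c) ?_⟩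
  · intro i hi heq
    obtain ⟨hik, hi⟩ := Finset.mem_erase.mp hi
    exact hik (aEig_injOn hp (Finset.mem_range_succ_iff.mp hi) hk' heq)
  · rwa [Finset.add_sum_erase _ (fun i => c i • xpm p i) hk, hc]

theorem xpm_mem_iff_succ_mem (hB : ∀ v ∈ W, Bop p v ∈ W) {k : ℕ} (hk : k < p) :
    xpm p k ∈ W ↔ xpm p (k + 1) ∈ W := by
  have hpair {i j : ℕ} (hi : i ≤ p) (hj : j ≤ p) (hij : i ≠ j)
      (h : xpm p j + xpm p i ∈ W) : xpm p j ∈ W :=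
    W.mem_of_add_eigenvectors_mem hA (Aop_xpm hp) (fun h => hij (aEig_injOn hp hi hj h)) h
  constructor
  · intro h
    have hBk := hB _ h
    rcases k with _ | k
    · rwa [Bop_xpm_zero hp, W.smul_mem_iff two_ne_zero] at hBk
    · rw [Bop_xpm_of_lt (by omega) hk, add_comm] at hBk
      exact hpair (by omega) (by omega) (by omega) hBk
  · intro h
    have hBk := hB _ h
    rcases (Nat.add_one_le_of_lt hk).eq_or_lt with rfl | hkp
    · rwa [Bop_xpm_self hp, W.smul_mem_iff two_ne_zero, Nat.add_sub_cancel] at hBk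
    · rw [Bop_xpm_of_lt (by omega) hkp, Nat.add_sub_cancel] at hBk
      exact hpair (by omega) (by omega) (by omega) hBk

end Invariant

/-- `J₁` is simple under the two operators `A`, `B`: every subspace of `J₁`
invariant under `A` and `B` is `0` or `J₁`. -/
theorem stmt11 (p : ℕ) (hp : 2 ≤ p) :
    ∀ W : Submodule ℂ (GTA p), W ≤ J1 p →
      (∀ v ∈ W, Aop p v ∈ W) → (∀ v ∈ W, Bop p v ∈ W) →
      W = ⊥ ∨ W = J1 p := by
  intro W hWJ hA hB
  have hp0 : p ≠ 0 := by omega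
  refine or_iff_not_imp_left.mpr fun hW => le_antisymm hWJ ?_
  obtain ⟨k, hk, hkW⟩ := exists_xpm_mem hp0 hA hWJ hW
  rw [J1_eq_span, Submodule.span_le]
  rintro _ ⟨j, hj, rfl⟩
  exact Nat.forall_le_of_forall_lt_iff_succ (P := fun j => xpm p j ∈ W) hk hkW
    (fun i hi => xpm_mem_iff_succ_mem hp0 hA hB hi) j (Finset.mem_range_succ_iff.mp hj)
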